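/- arXiv:0707.2340 — 7 statements merged into one kernel-verified Lean document; each statement's English description precedes it below -/
import Mathlib

section
/- Let f be a multi-affine real stable polynomial in two variables with real coefficients, and for θ ∈ [0,1] define T_θ(f)(z1,z2) = θ·f(z1,z2) + (1−θ)·f(z2,z1). Then T_θ(f) is real stable. -/
/-!
A multi-affine real polynomial `a₀₀ + a₀₁ z₂ + a₁₀ z₁ + a₁₁ z₁ z₂` is stable exactly when it is
not identically zero and `a₀₀ a₁₁ ≤ a₀₁ a₁₀`: solving for `z₂` gives
`z₂ = -(a₀₀ + a₁₀ z₁) / (a₀₁ + a₁₁ z₁)`, a real Möbius transform of `z₁` with determinant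
`a₀₀ a₁₁ - a₀₁ a₁₀`, and such a map sends some point of the upper half-plane into it precisely
when that determinant is positive. Symmetrization keeps `a₀₀, a₁₁` and replaces `a₀₁, a₁₀` by
`b = θ a₀₁ + (1-θ) a₁₀`, `c = θ a₁₀ + (1-θ) a₀₁`, and `b c - a₀₁ a₁₀ = θ (1-θ) (a₀₁ - a₁₀)² ≥ 0`,
so the determinant condition survives.
-/

open Complex ComplexConjugate

namespace MultiAffine

def eval (a00 a01 a10 a11 : ℝ) (z1 z2 : ℂ) : ℂ :=
  a00 + a01 * z2 + a10 * z1 + a11 * z1 * z2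

def IsStable (f : ℂ → ℂ → ℂ) : Prop :=
  ∀ z1 z2 : ℂ, 0 < z1.im → 0 < z2.im → f z1 z2 ≠ 0

lemma eq_zero_of_ofReal_add_mul_eq_zero {a b : ℝ} {z : ℂ} (hz : z.im ≠ 0)
    (h : (a : ℂ) + b * z = 0) : a = 0 ∧ b = 0 := by
  have hb : b * z.im = 0 := by simpa using congrArg Complex.im h
  obtain rfl : b = 0 := (mul_eq_zero.mp hb).resolve_right hz
  simpa using h

lemma im_ofReal_add_mul_mul_conj (a b c d : ℝ) (z : ℂ) :
    (((a : ℂ) + b * z) * conj ((c : ℂ) + d * z)).im = (b * c - a * d) * z.im := by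
  simp only [mul_im, mul_re, add_re, add_im, conj_re, conj_im, ofReal_re, ofReal_im]
  ring

/-- Solving `f(z₁, z₂) = 0` for `z₂` forces `Im z₂ ≤ 0` unless all coefficients vanish. -/
lemma coeffs_eq_zero_of_eval_eq_zero {a00 a01 a10 a11 : ℝ} (hdet : a00 * a11 ≤ a01 * a10)
    {z1 z2 : ℂ} (h1 : 0 < z1.im) (h2 : 0 < z2.im) (h : eval a00 a01 a10 a11 z1 z2 = 0) :
    a00 = 0 ∧ a01 = 0 ∧ a10 = 0 ∧ a11 = 0 := by
  set p : ℂ := a00 + a10 * z1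
  set q : ℂ := a01 + a11 * z1
  have hpq : p = -(q * z2) := by
    rw [eq_neg_iff_add_eq_zero, ← h]
    simp only [eval, p, q]
    ring
  have hIm : normSq q * z2.im = (a00 * a11 - a01 * a10) * z1.im := by
    have : (p * conj q).im = (a10 * a01 - a00 * a11) * z1.im :=
      im_ofReal_add_mul_mul_conj a00 a10 a01 a11 z1
    rw [hpq, neg_mul, mul_right_comm, mul_conj, neg_im, im_ofReal_mul] at this
    linarith
  have hq : q = 0 := by
    rw [← normSq_eq_zero]
    have : normSq q * z2.im ≤ 0 := hIm ▸ mul_nonpos_of_nonpos_of_nonneg (by linarith) h1.le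
    nlinarith [normSq_nonneg q]
  rw [hq, zero_mul, neg_zero] at hpq
  obtain ⟨h00, h10⟩ := eq_zero_of_ofReal_add_mul_eq_zero h1.ne' hpq
  obtain ⟨h01, h11⟩ := eq_zero_of_ofReal_add_mul_eq_zero h1.ne' hq
  exact ⟨h00, h01, h10, h11⟩

/-- The witness is `z₁ = i` and `z₂ = -(a₀₀ + a₁₀ i) / (a₀₁ + a₁₁ i)`. -/
lemma det_le_of_isStable {a00 a01 a10 a11 : ℝ} (hf : IsStable (eval a00 a01 a10 a11)) :
    a00 * a11 ≤ a01 * a10 := by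
  by_contra! hdet
  set q : ℂ := a01 + a11 * I
  have hq : q ≠ 0 := by
    intro hq
    obtain ⟨rfl, rfl⟩ := eq_zero_of_ofReal_add_mul_eq_zero (by simp) hq
    simp at hdet
  set z2 : ℂ := -(a00 + a10 * I) / q
  have hz2 : 0 < z2.im := by
    have hIm := im_ofReal_add_mul_mul_conj a00 a10 a01 a11 I
    rw [I_im, mul_one] at hIm
    rw [show z2 = -((a00 + a10 * I) * conj q) / (normSq q : ℂ) by
      rw [div_eq_div_iff hq (by exact_mod_cast (normSq_pos.mpr hq).ne'), ← mul_conj]; ring]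
    rw [div_ofReal_im, neg_im, hIm]
    exact div_pos (by linarith) (normSq_pos.mpr hq)
  refine hf I z2 (by simp) hz2 ?_
  simp only [eval, z2]
  field_simp
  ring

theorem isStable_eval_iff {a00 a01 a10 a11 : ℝ} :
    IsStable (eval a00 a01 a10 a11) ↔
      a00 * a11 ≤ a01 * a10 ∧ ¬(a00 = 0 ∧ a01 = 0 ∧ a10 = 0 ∧ a11 = 0) := by
  refine ⟨fun hf => ⟨det_le_of_isStable hf, ?_⟩, fun ⟨hdet, hne⟩ z1 z2 h1 h2 h =>
    hne (coeffs_eq_zero_of_eval_eq_zero hdet h1 h2 h)⟩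
  rintro ⟨rfl, rfl, rfl, rfl⟩
  exact hf I I (by simp) (by simp) (by simp [eval])

end MultiAffine

open MultiAffine in
/-- Partial symmetrization preserves real stability for multi-affine real polynomials
in two variables: if `f(z₁,z₂) = a₀₀ + a₀₁ z₂ + a₁₀ z₁ + a₁₁ z₁ z₂` is real stable and
`θ ∈ [0,1]`, then `T_θ(f)(z₁,z₂) = θ f(z₁,z₂) + (1-θ) f(z₂,z₁)` is real stable. -/
theorem stmt1 (a00 a01 a10 a11 : ℝ) (θ : ℝ) (hθ0 : 0 ≤ θ) (hθ1 : θ ≤ 1)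
    (hstable : ∀ z1 z2 : ℂ, 0 < z1.im → 0 < z2.im →
      (a00 : ℂ) + (a01 : ℂ) * z2 + (a10 : ℂ) * z1 + (a11 : ℂ) * z1 * z2 ≠ 0) :
    ∀ z1 z2 : ℂ, 0 < z1.im → 0 < z2.im →
      (θ : ℂ) * ((a00 : ℂ) + (a01 : ℂ) * z2 + (a10 : ℂ) * z1 + (a11 : ℂ) * z1 * z2) +
      (1 - (θ : ℂ)) * ((a00 : ℂ) + (a01 : ℂ) * z1 + (a10 : ℂ) * z2 + (a11 : ℂ) * z2 * z1) ≠ 0 := by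
  obtain ⟨hdet, hne⟩ := isStable_eval_iff.mp (show IsStable (eval a00 a01 a10 a11) from hstable)
  set b := θ * a01 + (1 - θ) * a10
  set c := θ * a10 + (1 - θ) * a01
  have hbc : b * c - a01 * a10 = θ * (1 - θ) * (a01 - a10) ^ 2 := by ring
  have hsym : IsStable (eval a00 b c a11) := by
    refine isStable_eval_iff.mpr ⟨?_, ?_⟩
    · nlinarith [mul_nonneg (mul_nonneg hθ0 (sub_nonneg.mpr hθ1)) (sq_nonneg (a01 - a10))]
    · rintro ⟨rfl, hb, hc, rfl⟩
      have hsum : a10 = -a01 := by linarith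
      have ha01 : a01 = 0 := by nlinarith
      exact hne ⟨rfl, ha01, by rw [hsum, ha01, neg_zero], rfl⟩
  intro z1 z2 h1 h2
  convert hsym z1 z2 h1 h2 using 1
  simp only [eval, b, c]
  push_cast
  ring
end

section
/- Let A1, ..., Am be complex positive semi-definite n×n matrices and B a complex Hermitian n×n matrix. Then the polynomial f(z1,...,zm) = det(z1·A1 + ... + zm·Am + B) is either identically zero or real stable: it has real coefficients, and f(z) ≠ 0 whenever all coordinates zj have positive imaginary part. -/
open MvPolynomial ComplexOrder

/-- The determinantal polynomial `det(z₁A₁ + ⋯ + zₘAₘ + B)` as a multivariate polynomial. -/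
noncomputable def detPencil (n m : ℕ) (A : Fin m → Matrix (Fin n) (Fin n) ℂ)
    (B : Matrix (Fin n) (Fin n) ℂ) : MvPolynomial (Fin m) ℂ :=
  Matrix.det ((∑ j, (MvPolynomial.X j : MvPolynomial (Fin m) ℂ) • (A j).map MvPolynomial.C) +
    B.map MvPolynomial.C)

/-!
If `f(z) = 0` at a point `z` with all `Im zⱼ > 0`, pick `v ≠ 0` in the kernel of
`∑ zⱼAⱼ + B`. The imaginary part of `0 = v*(∑ zⱼAⱼ + B)v = ∑ zⱼ (v*Aⱼv) + v*Bv` is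
`∑ Im zⱼ · v*Aⱼv`, a sum of nonnegative reals, so `v*Aⱼv = 0`, hence `Aⱼv = 0` for all `j` and
then `Bv = 0`. So `v` lies in the kernel of `∑ wⱼAⱼ + B` for every `w`, and `f ≡ 0`.
The coefficients are real because conjugating them transposes the Hermitian matrices `Aⱼ`, `B`,
which does not change the determinant.
-/

namespace Matrix

variable {ι n : Type*} [Fintype ι] [Fintype n]

theorem mulVec_eq_zero_of_sum_smul_add_mulVec_eq_zero {A : ι → Matrix n n ℂ}
    (hA : ∀ j, (A j).PosSemidef) {B : Matrix n n ℂ} (hB : B.IsHermitian) {z : ι → ℂ}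
    (hz : ∀ j, 0 < (z j).im) {v : n → ℂ} (hv : (∑ j, z j • A j + B) *ᵥ v = 0) :
    (∀ j, A j *ᵥ v = 0) ∧ B *ᵥ v = 0 := by
  set q : ι → ℂ := fun j => star v ⬝ᵥ (A j *ᵥ v)
  have hq_im (j : ι) : (q j).im = 0 := (hA j).1.im_star_dotProduct_mulVec_self v
  have hB_im : (star v ⬝ᵥ (B *ᵥ v)).im = 0 := hB.im_star_dotProduct_mulVec_self v
  have hquad : ∑ j, z j * q j + star v ⬝ᵥ (B *ᵥ v) = 0 := by
    have := congrArg (star v ⬝ᵥ ·) hv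
    simpa only [add_mulVec, sum_mulVec, smul_mulVec, dotProduct_add, dotProduct_sum,
      dotProduct_smul, smul_eq_mul, dotProduct_zero] using this
  have him : ∑ j, (z j).im * (q j).re = 0 := by
    simpa [Complex.mul_im, hq_im, hB_im] using congrArg Complex.im hquad
  have hq (j : ι) : q j = 0 := by
    have hterm := (Finset.sum_eq_zero_iff_of_nonneg fun i _ =>
      mul_nonneg (hz i).le ((hA i).re_dotProduct_nonneg v)).mp him j (Finset.mem_univ j)
    exact Complex.ext ((mul_eq_zero.mp hterm).resolve_left (hz j).ne') (hq_im j)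
  have hAv (j : ι) : A j *ᵥ v = 0 := ((hA j).dotProduct_mulVec_zero_iff v).mp (hq j)
  refine ⟨hAv, ?_⟩
  simpa [add_mulVec, sum_mulVec, smul_mulVec, hAv] using hv

end Matrix

open Matrix

lemma eval_detPencil (n m : ℕ) (A : Fin m → Matrix (Fin n) (Fin n) ℂ)
    (B : Matrix (Fin n) (Fin n) ℂ) (z : Fin m → ℂ) :
    eval z (detPencil n m A B) = (∑ j, z j • A j + B).det := by
  rw [detPencil, RingHom.map_det]
  congr 1
  ext i k
  simp [Matrix.sum_apply]

lemma detPencil_eq_zero_of_mulVec_eq_zero {n m : ℕ} {A : Fin m → Matrix (Fin n) (Fin n) ℂ}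
    {B : Matrix (Fin n) (Fin n) ℂ} {v : Fin n → ℂ} (hv : v ≠ 0) (hAv : ∀ j, A j *ᵥ v = 0)
    (hBv : B *ᵥ v = 0) : detPencil n m A B = 0 := by
  refine MvPolynomial.funext fun w => ?_
  rw [eval_detPencil, map_zero, ← exists_mulVec_eq_zero_iff]
  exact ⟨v, hv, by simp [add_mulVec, sum_mulVec, smul_mulVec, hAv, hBv]⟩

lemma map_conj_detPencil {n m : ℕ} {A : Fin m → Matrix (Fin n) (Fin n) ℂ}
    (hA : ∀ j, (A j).IsHermitian) {B : Matrix (Fin n) (Fin n) ℂ} (hB : B.IsHermitian) :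
    map (starRingEnd ℂ) (detPencil n m A B) = detPencil n m A B := by
  have hAconj (j : Fin m) (i k : Fin n) : starRingEnd ℂ (A j k i) = A j i k := (hA j).apply i k
  have hBconj (i k : Fin n) : starRingEnd ℂ (B k i) = B i k := hB.apply i k
  rw [detPencil, RingHom.map_det, ← det_transpose]
  congr 1
  refine Matrix.ext fun i k => ?_
  simp [Matrix.sum_apply, hAconj, hBconj]

lemma coeff_detPencil_im_eq_zero {n m : ℕ} {A : Fin m → Matrix (Fin n) (Fin n) ℂ}
    (hA : ∀ j, (A j).IsHermitian) {B : Matrix (Fin n) (Fin n) ℂ} (hB : B.IsHermitian)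
    (α : Fin m →₀ ℕ) : ((detPencil n m A B).coeff α).im = 0 := by
  have := congrArg (coeff α) (map_conj_detPencil hA hB)
  rw [coeff_map] at this
  exact Complex.conj_eq_iff_im.mp this

/-- If `A₁,…,Aₘ` are complex positive semi-definite `n×n` matrices and `B` is Hermitian,
then `f(z) = det(z₁A₁ + ⋯ + zₘAₘ + B)` is identically zero or real stable: it has real
coefficients and does not vanish when all coordinates have positive imaginary part. -/
theorem stmt2 (n m : ℕ) (A : Fin m → Matrix (Fin n) (Fin n) ℂ)
    (hA : ∀ j, (A j).PosSemidef) (B : Matrix (Fin n) (Fin n) ℂ) (hB : B.IsHermitian) :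
    detPencil n m A B = 0 ∨
    ((∀ α : Fin m →₀ ℕ, ((detPencil n m A B).coeff α).im = 0) ∧
      (∀ z : Fin m → ℂ, (∀ j, 0 < (z j).im) →
        MvPolynomial.eval z (detPencil n m A B) ≠ 0)) := by
  by_cases hroot : ∃ z : Fin m → ℂ, (∀ j, 0 < (z j).im) ∧ eval z (detPencil n m A B) = 0
  · obtain ⟨z, hz, hz0⟩ := hroot
    rw [eval_detPencil, ← exists_mulVec_eq_zero_iff] at hz0
    obtain ⟨v, hv, hMv⟩ := hz0
    obtain ⟨hAv, hBv⟩ := mulVec_eq_zero_of_sum_smul_add_mulVec_eq_zero hA hB hz hMv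
    exact Or.inl (detPencil_eq_zero_of_mulVec_eq_zero hv hAv hBv)
  · push Not at hroot
    exact Or.inr ⟨coeff_detPencil_im_eq_zero (fun j => (hA j).1) hB, hroot⟩
end

section
/- Let A1, ..., Am be complex positive semi-definite n×n matrices and B a complex positive semi-definite n×n matrix. Then every coefficient of the polynomial f(z1,...,zm) = det(z1·A1 + ... + zm·Am + B), viewed as a polynomial in z1,...,zm, is a non-negative real number. -/
/-!
Write every positive semi-definite matrix as a sum of rank-one matrices `v vᴴ`. Then the pencil
becomes `U D Uᴴ`, where `U` collects all the vectors `v` as columns and `D` is diagonal with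
monomial entries. Expanding the determinant along columns and symmetrizing over permutations gives
`n! · det (U D Uᴴ) = ∑ₚ |det U_p|² · ∏ᵢ D_{p i}` over all maps `p : Fin n → σ`, where `U_p` is the
square submatrix of `U` with columns `p`; this is a sum of monomials with non-negative real
coefficients.
-/

open MvPolynomial ComplexOrder

open Matrix Finset Equiv
open scoped Nat

namespace Matrix

variable {m σ R : Type*} [Fintype m] [DecidableEq m] [Fintype σ] [CommRing R]

theorem det_mul_eq_sum_det_submatrix_mul_prod (V : Matrix m σ R) (W : Matrix σ m R) :
    det (V * W) = ∑ p : m → σ, det (V.submatrix id p) * ∏ i, W (p i) i := by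
  simp only [det_apply', mul_apply, prod_univ_sum, mul_sum, Fintype.piFinset_univ,
    submatrix_apply, id, sum_mul]
  rw [Finset.sum_comm]
  refine sum_congr rfl fun p _ => sum_congr rfl fun π _ => ?_
  rw [mul_assoc, ← prod_mul_distrib]

/-- A form of the Cauchy–Binet formula that needs no ordering of the `card m`-subsets of `σ`. -/
theorem factorial_card_mul_det_mul (V : Matrix m σ R) (W : Matrix σ m R) :
    ((Fintype.card m)! : R) * det (V * W) =
      ∑ p : m → σ, det (V.submatrix id p) * det (W.submatrix p id) := by
  have reindex (π : Perm m) : det (V * W) =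
      ∑ p : m → σ, (Perm.sign π : R) * det (V.submatrix id p) * ∏ i, W (p (π i)) i := by
    rw [det_mul_eq_sum_det_submatrix_mul_prod,
      ← (π.symm.arrowCongr (Equiv.refl σ)).sum_comp]
    refine sum_congr rfl fun p _ => ?_
    rw [← det_permute']
    rfl
  calc ((Fintype.card m)! : R) * det (V * W) = ∑ π : Perm m, det (V * W) := by
        simp [Fintype.card_perm]
    _ = ∑ p : m → σ, ∑ π : Perm m,
          det (V.submatrix id p) * ((Perm.sign π : R) * ∏ i, W (p (π i)) i) := by
        rw [sum_comm]
        exact sum_congr rfl fun π _ => by rw [reindex π]; exact sum_congr rfl fun p _ => by ring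
    _ = ∑ p : m → σ, det (V.submatrix id p) * det (W.submatrix p id) := by
        refine sum_congr rfl fun p _ => ?_
        rw [← mul_sum, det_apply' (W.submatrix p id)]
        rfl

end Matrix

section Positivity

variable {n σ τ : Type*} [Fintype n] [DecidableEq n] [Fintype σ] [DecidableEq σ]

theorem det_submatrix_map_C_mul_det_submatrix_eq_monomial (U : Matrix n σ ℂ) (β : σ → τ →₀ ℕ)
    (p : n → σ) :
    det ((U.map (C (σ := τ))).submatrix id p) *
        det ((diagonal (fun s => monomial (β s) (1 : ℂ)) * Uᴴ.map (C (σ := τ))).submatrix p id) =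
      monomial (∑ i, β (p i)) (det (U.submatrix id p) * star (det (U.submatrix id p))) := by
  have row_scaled :
      (diagonal (fun s => monomial (β s) (1 : ℂ)) * Uᴴ.map (C (σ := τ))).submatrix p id =
        of fun i j => monomial (β (p i)) 1 * ((U.submatrix id p)ᴴ.map C) i j := by
    ext i j
    simp [diagonal_mul]
  have det_map_C (M : Matrix n n ℂ) : det (M.map (C (σ := τ))) = C (det M) :=
    (RingHom.map_det _ M).symm
  rw [row_scaled, det_mul_column, ← monomial_sum_one, submatrix_map, det_map_C, det_map_C,
    det_conjTranspose, mul_comm (monomial _ 1), ← mul_assoc, ← C_mul, C_mul_monomial, mul_one]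

theorem coeff_det_map_C_mul_diagonal_monomial_mul_conjTranspose_nonneg (U : Matrix n σ ℂ)
    (β : σ → τ →₀ ℕ) (α : τ →₀ ℕ) :
    0 ≤ (det (U.map (C (σ := τ)) * diagonal (fun s => monomial (β s) (1 : ℂ)) *
      Uᴴ.map (C (σ := τ)))).coeff α := by
  have symmetrized : ((Fintype.card n)! : ℂ) * (det (U.map (C (σ := τ)) *
      diagonal (fun s => monomial (β s) (1 : ℂ)) * Uᴴ.map (C (σ := τ)))).coeff α =
      ∑ p : n → σ, (monomial (∑ i, β (p i))
        (det (U.submatrix id p) * star (det (U.submatrix id p)))).coeff α := by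
    rw [← coeff_C_mul, map_natCast, Matrix.mul_assoc, factorial_card_mul_det_mul, coeff_sum]
    simp only [det_submatrix_map_C_mul_det_submatrix_eq_monomial]
  calc (0 : ℂ) ≤ ((Fintype.card n)! : ℂ)⁻¹ * ∑ p : n → σ, (monomial (∑ i, β (p i))
        (det (U.submatrix id p) * star (det (U.submatrix id p)))).coeff α := by
        refine mul_nonneg (by positivity) (sum_nonneg fun p _ => ?_)
        classical
        rw [coeff_monomial]
        split_ifs
        exacts [mul_star_self_nonneg _, le_rfl]
    _ = _ := by rw [← symmetrized, inv_mul_cancel_left₀ (by positivity)]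

theorem coeff_det_sum_monomial_smul_vecMulVec_nonneg (v : σ → n → ℂ) (β : σ → τ →₀ ℕ)
    (α : τ →₀ ℕ) :
    0 ≤ (det (∑ s, monomial (β s) (1 : ℂ) •
      (vecMulVec (v s) (star (v s))).map (C (σ := τ)))).coeff α := by
  have gram : ∑ s, monomial (β s) (1 : ℂ) • (vecMulVec (v s) (star (v s))).map C =
      (of fun i s => v s i).map (C (σ := τ)) * diagonal (fun s => monomial (β s) (1 : ℂ)) *
        (of fun i s => v s i)ᴴ.map (C (σ := τ)) := by
    refine Matrix.ext fun i j => ?_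
    rw [Matrix.mul_apply, Matrix.sum_apply]
    simp only [mul_diagonal, vecMulVec_apply, Matrix.smul_apply, map_apply, of_apply,
      conjTranspose_apply]
    refine sum_congr rfl fun s _ => ?_
    rw [smul_eq_mul, C_mul, Pi.star_apply]
    ring
  rw [gram]
  exact coeff_det_map_C_mul_diagonal_monomial_mul_conjTranspose_nonneg _ β α

end Positivity

theorem coeff_det_sum_monomial_smul_posSemidef_nonneg {n ι τ : Type*} [Fintype n]
    [DecidableEq n] [Fintype ι] {A : ι → Matrix n n ℂ} (hA : ∀ i, (A i).PosSemidef) (β : ι → τ →₀ ℕ)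
    (α : τ →₀ ℕ) :
    0 ≤ (det (∑ i, monomial (β i) (1 : ℂ) • (A i).map (C (σ := τ)))).coeff α := by
  choose k v hv using fun i => posSemidef_iff_eq_sum_vecMulVec.mp (hA i)
  classical
  have rank_one : ∑ i, monomial (β i) (1 : ℂ) • (A i).map C =
      ∑ x : (i : ι) × Fin (k i), monomial (β x.1) (1 : ℂ) •
        (vecMulVec (v x.1 x.2) (star (v x.1 x.2))).map (C (σ := τ)) := by
    rw [Fintype.sum_sigma]
    refine sum_congr rfl fun i _ => ?_
    simp only [hv i, ← RingHom.mapMatrix_apply, map_sum, smul_sum]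
  rw [rank_one]
  exact coeff_det_sum_monomial_smul_vecMulVec_nonneg _ _ α

/-- If `A₁,…,Aₘ` and `B` are complex positive semi-definite `n×n` matrices, then every
coefficient of `f(z) = det(z₁A₁ + ⋯ + zₘAₘ + B)` is a non-negative real number. -/
theorem stmt3 (n m : ℕ) (A : Fin m → Matrix (Fin n) (Fin n) ℂ)
    (hA : ∀ j, (A j).PosSemidef) (B : Matrix (Fin n) (Fin n) ℂ) (hB : B.PosSemidef) :
    ∀ α : Fin m →₀ ℕ, ∃ r : ℝ, 0 ≤ r ∧ (detPencil n m A B).coeff α = (r : ℂ) := by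
  intro α
  have pencil : detPencil n m A B = det (∑ i : Option (Fin m),
      monomial (i.elim 0 fun j => Finsupp.single j 1) (1 : ℂ) • (i.elim B A).map C) := by
    rw [detPencil, Fintype.sum_option, add_comm]
    simp [X]
  have hPSD : ∀ i : Option (Fin m), (i.elim B A).PosSemidef := fun i => i.rec hB hA
  obtain ⟨r, hr, hcoeff⟩ := RCLike.nonneg_iff_exists_ofReal.mp
    (coeff_det_sum_monomial_smul_posSemidef_nonneg hPSD _ α)
  exact ⟨r, hr, by rw [pencil, ← hcoeff]; rfl⟩
end

section
/- Let f ∈ ℝ[z1,...,zn] be a polynomial with all coefficients non-negative, of total degree d, and let f_H(z1,...,z_{n+1}) = z_{n+1}^d · f(z1/z_{n+1},...,zn/z_{n+1}) be its homogenization. If f_H is hyperbolic with respect to some vector e ∈ ℝ^{n+1} with all coordinates non-negative and f_H(e) ≠ 0, then f_H is hyperbolic with respect to every vector e' ∈ ℝ^{n+1} with all coordinates strictly positive. -/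
open MvPolynomial

/-- A homogeneous polynomial `p` is hyperbolic with respect to `e` if `p(e) ≠ 0` and for
every real `x` the univariate polynomial `t ↦ p(x + t e)` has only real zeros. -/
def IsHyperbolicWrt {m : ℕ} (p : MvPolynomial (Fin m) ℝ) (e : Fin m → ℝ) : Prop :=
  MvPolynomial.eval e p ≠ 0 ∧
  ∀ x : Fin m → ℝ, ∀ t : ℂ,
    MvPolynomial.eval (fun i => (x i : ℂ) + t * (e i : ℂ))
      (MvPolynomial.map (algebraMap ℝ ℂ) p) = 0 → t.im = 0

/-- The homogenization `f_H(z₁,…,z_{n+1}) = z_{n+1}^d f(z₁/z_{n+1},…,zₙ/z_{n+1})` of a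
polynomial `f` of total degree at most `d`. -/
noncomputable def homogenization {n : ℕ} (f : MvPolynomial (Fin n) ℝ) (d : ℕ) :
    MvPolynomial (Fin (n + 1)) ℝ :=
  ∑ α ∈ f.support,
    MvPolynomial.monomial
      (Finsupp.mapDomain Fin.castSucc α +
        Finsupp.single (Fin.last n) (d - α.sum fun _ m => m)) (f.coeff α)

/-! If all coefficients of `f` are non-negative, then `f_H > 0` on the open positive orthant.
The segment from `e` to a positive `e'` lies in that orthant except possibly for its endpoint `e`,
where `f_H(e) ≠ 0`. So it suffices to show that hyperbolicity propagates along a segment avoiding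
the zero set of a homogeneous `p`. For real `x` and `ε > 0`, the roots of `t ↦ p(x + iεe + tv)`
depend continuously on `v` in the segment and stay bounded. They never cross the real axis,
because `p(y + iεe) ≠ 0` for real `y`. At `v = e` they lie in the open lower half-plane, so they
stay there up to `v = e'`, and letting `ε → 0` keeps the roots for `e'` out of the upper
half-plane. -/

open Filter Topology Set ComplexConjugate

namespace Polynomial

theorem exists_isRoot_norm_sub_lt {K : Type*} [NormedField K] [IsAlgClosed K] {P : K[X]}
    {z : K} {ε : ℝ} (hε : 0 < ε) (h : ‖P.eval z‖ < ‖P.leadingCoeff‖ * ε ^ P.natDegree) :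
    ∃ r, P.IsRoot r ∧ ‖z - r‖ < ε := by
  by_contra! hfar
  have hsplit : P.Splits := IsAlgClosed.splits P
  have hprod : ε ^ P.natDegree ≤ (P.roots.map fun r => ‖z - r‖).prod := by
    rw [hsplit.natDegree_eq_card_roots, ← Multiset.prod_replicate, ← Multiset.map_const']
    exact Multiset.prod_map_le_prod_map₀ _ _ (fun _ _ => hε.le)
      fun r hr => hfar r (isRoot_of_mem_roots hr)
  have heval : ‖P.eval z‖ = ‖P.leadingCoeff‖ * (P.roots.map fun r => ‖z - r‖).prod := by
    rw [hsplit.eval_eq_prod_roots, norm_mul]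
    have := map_multiset_prod (normHom : K →*₀ ℝ) (P.roots.map (z - ·))
    rw [Multiset.map_map] at this
    exact congrArg _ this
  rw [heval] at h
  exact h.not_ge (mul_le_mul_of_nonneg_left hprod (norm_nonneg _))

theorem coeff_prod_sum_of_natDegree_le {R ι : Type*} [CommSemiring R] (s : Finset ι)
    (f : ι → R[X]) (n : ι → ℕ) (h : ∀ i ∈ s, (f i).natDegree ≤ n i) :
    (∏ i ∈ s, f i).coeff (∑ i ∈ s, n i) = ∏ i ∈ s, (f i).coeff (n i) := by
  induction s using Finset.cons_induction with
  | empty => simp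
  | cons a s ha ih =>
    rw [Finset.forall_mem_cons] at h
    rw [Finset.prod_cons, Finset.sum_cons, Finset.prod_cons,
      coeff_mul_add_eq_of_natDegree_le h.1
        ((natDegree_prod_le s f).trans (Finset.sum_le_sum h.2)), ih h.2]

end Polynomial

theorem Complex.im_pos_of_norm_sub_lt_im {z w : ℂ} (h : ‖z - w‖ < z.im) : 0 < w.im := by
  have := (le_abs_self _).trans (Complex.abs_im_le_norm (z - w))
  rw [Complex.sub_im] at this
  linarith

namespace MvPolynomial

section CommSemiring

variable {σ R : Type*} [CommSemiring R] {q : MvPolynomial σ R} {d : ℕ}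

theorem IsHomogeneous.eval_smul (hq : q.IsHomogeneous d) (c : R) (z : σ → R) :
    eval (c • z) q = c ^ d * eval z q := by
  simp only [eval_eq, Finset.mul_sum]
  refine Finset.sum_congr rfl fun β hβ => ?_
  simp only [Pi.smul_apply, smul_eq_mul, mul_pow, Finset.prod_mul_distrib,
    Finset.prod_pow_eq_pow_sum, ← hq.degree_eq_sum_deg_support hβ]
  ring

noncomputable def linePoly (q : MvPolynomial σ R) (c v : σ → R) : Polynomial R :=
  eval₂ Polynomial.C (fun i => Polynomial.C (v i) * Polynomial.X + Polynomial.C (c i)) q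

theorem eval_linePoly (c v : σ → R) (t : R) :
    (linePoly q c v).eval t = eval (fun i => c i + t * v i) q := by
  rw [linePoly, polynomial_eval_eval₂]
  congr 1
  · ext; simp
  · funext i
    simp only [Polynomial.eval_add, Polynomial.eval_mul, Polynomial.eval_C, Polynomial.eval_X]
    ring

theorem IsHomogeneous.natDegree_linePoly_le (hq : q.IsHomogeneous d) (c v : σ → R) :
    (linePoly q c v).natDegree ≤ d := by
  rw [linePoly, eval₂_eq]
  refine Polynomial.natDegree_sum_le_of_forall_le _ _ fun β hβ => ?_
  refine Polynomial.natDegree_C_mul_le _ _ |>.trans <| (Polynomial.natDegree_prod_le _ _).trans ?_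
  rw [hq.degree_eq_sum_deg_support hβ]
  refine Finset.sum_le_sum fun i _ => ?_
  simpa using Polynomial.natDegree_pow_le_of_le (β i)
    (Polynomial.natDegree_linear_le (a := v i) (b := c i))

theorem IsHomogeneous.coeff_linePoly (hq : q.IsHomogeneous d) (c v : σ → R) :
    (linePoly q c v).coeff d = eval v q := by
  rw [linePoly, eval₂_eq, eval_eq, Polynomial.finsetSum_coeff]
  refine Finset.sum_congr rfl fun β hβ => ?_
  rw [Polynomial.coeff_C_mul, hq.degree_eq_sum_deg_support hβ,
    Polynomial.coeff_prod_sum_of_natDegree_le _ _ _ fun i _ => ?_]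
  · congr 1
    refine Finset.prod_congr rfl fun i _ => ?_
    simpa using Polynomial.coeff_pow_of_natDegree_le (m := β i)
      (Polynomial.natDegree_linear_le (a := v i) (b := c i))
  · simpa using Polynomial.natDegree_pow_le_of_le (β i)
      (Polynomial.natDegree_linear_le (a := v i) (b := c i))

theorem IsHomogeneous.natDegree_linePoly (hq : q.IsHomogeneous d) (c : σ → R) {v : σ → R}
    (hv : eval v q ≠ 0) : (linePoly q c v).natDegree = d :=
  (hq.natDegree_linePoly_le c v).antisymm
    (Polynomial.le_natDegree_of_ne_zero (by rwa [hq.coeff_linePoly]))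

theorem IsHomogeneous.leadingCoeff_linePoly (hq : q.IsHomogeneous d) (c : σ → R) {v : σ → R}
    (hv : eval v q ≠ 0) : (linePoly q c v).leadingCoeff = eval v q := by
  rw [Polynomial.leadingCoeff, hq.natDegree_linePoly c hv, hq.coeff_linePoly]

end CommSemiring

section NormedField

variable {K σ : Type*} [NormedField K] {q : MvPolynomial σ K} {d : ℕ}

theorem IsHomogeneous.eventually_exists_root_near [IsAlgClosed K] (hq : q.IsHomogeneous d)
    {X : Type*} [TopologicalSpace X] {a b : X → σ → K} {x₀ : X} (ha : ContinuousAt a x₀)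
    (hb : ContinuousAt b x₀) (hb₀ : eval (b x₀) q ≠ 0) {t₀ : K}
    (ht₀ : eval (fun i => a x₀ i + t₀ * b x₀ i) q = 0) {ε : ℝ} (hε : 0 < ε) :
    ∀ᶠ x in 𝓝 x₀, ∃ t, eval (fun i => a x i + t * b x i) q = 0 ∧ ‖t₀ - t‖ < ε := by
  have hline : ContinuousAt (fun x => eval (fun i => a x i + t₀ * b x i) q) x₀ :=
    (continuous_eval q).continuousAt.comp (ha.add (hb.const_smul t₀))
  have hlead : ContinuousAt (fun x => eval (b x) q) x₀ := (continuous_eval q).continuousAt.comp hb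
  have hsmall := hline.norm.eventually_lt (hlead.norm.mul_const (ε ^ d))
    (by rw [ht₀, norm_zero]; exact mul_pos (norm_pos_iff.2 hb₀) (pow_pos hε d))
  filter_upwards [hsmall] with x hx
  have hbx : eval (b x) q ≠ 0 := by
    rintro h
    rw [h, norm_zero, zero_mul] at hx
    exact (norm_nonneg _).not_gt hx
  obtain ⟨t, ht, hlt⟩ := Polynomial.exists_isRoot_norm_sub_lt (P := linePoly q (a x) (b x)) hε
    (by rwa [eval_linePoly, hq.leadingCoeff_linePoly _ hbx, hq.natDegree_linePoly _ hbx])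
  exact ⟨t, by rwa [Polynomial.IsRoot, eval_linePoly] at ht, hlt⟩

theorem IsHomogeneous.exists_bound_of_eval_line_eq_zero [Fintype σ] (hq : q.IsHomogeneous d)
    {X : Type*} [TopologicalSpace X] [CompactSpace X] {b : X → σ → K} (hb : Continuous b)
    (hb₀ : ∀ s, eval (b s) q ≠ 0) (c : σ → K) :
    ∃ M, ∀ s t, eval (fun i => c i + t * b s i) q = 0 → ‖t‖ ≤ M := by
  -- By compactness `q(z + b s) ≠ 0` for all `s` once `‖z‖ < δ`; by homogeneity a root `t ≠ 0`
  -- yields `q(t⁻¹ • c + b s) = 0`, so `δ ≤ ‖t⁻¹ • c‖`.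
  have hnear : ∀ᶠ z in 𝓝 (0 : σ → K), ∀ s ∈ univ, eval (z + b s) q ≠ 0 :=
    isCompact_univ.eventually_forall_of_forall_eventually fun s _ =>
      ((continuous_eval q).comp (continuous_fst.add (hb.comp continuous_snd))).continuousAt
        |>.eventually_ne (by simpa using hb₀ s)
  obtain ⟨δ, hδ, hball⟩ := Metric.eventually_nhds_iff.mp hnear
  refine ⟨‖c‖ / δ, fun s t ht => ?_⟩
  rcases eq_or_ne t 0 with rfl | ht0
  · simpa using div_nonneg (norm_nonneg c) hδ.le
  have hroot : eval (t⁻¹ • c + b s) q = 0 := by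
    have : t⁻¹ • (fun i => c i + t * b s i) = t⁻¹ • c + b s := by
      funext i
      simp [mul_add, ← mul_assoc, inv_mul_cancel₀ ht0]
    rw [← this, hq.eval_smul, ht, mul_zero]
  have hδle : δ ≤ ‖t⁻¹ • c‖ := by
    by_contra! h
    exact hball (by rwa [dist_zero_right]) s (mem_univ s) hroot
  rw [norm_smul, norm_inv] at hδle
  rw [le_div_iff₀ hδ]
  calc ‖t‖ * δ ≤ ‖t‖ * (‖t‖⁻¹ * ‖c‖) := by gcongr
    _ = ‖c‖ := by field_simp

end NormedField

section Complex

variable {σ : Type*} [Fintype σ] {q : MvPolynomial σ ℂ} {d : ℕ}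

/-- The roots of `t ↦ q(c + t b s)` stay bounded and depend continuously on `s`, and they never
meet the real axis. Hence the set of `s` for which none lies in the closed upper half-plane is
clopen. -/
theorem IsHomogeneous.eval_line_ne_zero_of_connected (hq : q.IsHomogeneous d)
    {X : Type*} [TopologicalSpace X] [CompactSpace X] [PreconnectedSpace X] {b : X → σ → ℂ}
    (hb : Continuous b) (hb₀ : ∀ s, eval (b s) q ≠ 0) {c : σ → ℂ}
    (hreal : ∀ s (τ : ℝ), eval (fun i => c i + τ * b s i) q ≠ 0) {s₁ : X}
    (hs₁ : ∀ t : ℂ, 0 ≤ t.im → eval (fun i => c i + t * b s₁ i) q ≠ 0) (s : X) {t : ℂ}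
    (ht : 0 ≤ t.im) : eval (fun i => c i + t * b s i) q ≠ 0 := by
  set G := {s | ∀ t : ℂ, 0 ≤ t.im → eval (fun i => c i + t * b s i) q ≠ 0}
  have hcont : Continuous fun p : X × ℂ => eval (fun i => c i + p.2 * b p.1 i) q :=
    (continuous_eval q).comp (continuous_const.add (continuous_snd.smul (hb.comp continuous_fst)))
  obtain ⟨M, hM⟩ := hq.exists_bound_of_eval_line_eq_zero hb hb₀ c
  have hG_open : IsOpen G := by
    refine isOpen_iff_mem_nhds.mpr fun s hs => ?_
    have hK : IsCompact (Metric.closedBall (0 : ℂ) M ∩ {t | 0 ≤ t.im}) :=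
      (isCompact_closedBall 0 M).inter_right (isClosed_le continuous_const Complex.continuous_im)
    have hnear := hK.eventually_forall_of_forall_eventually (x₀ := s)
      (P := fun s' t => eval (fun i => c i + t * b s' i) q ≠ 0) fun t ht =>
        (hcont.continuousAt (x := (s, t))).eventually_ne (hs t ht.2)
    filter_upwards [hnear] with s' hs' t ht h0
    exact hs' t ⟨by simpa using hM s' t h0, ht⟩ h0
  have hG_closed : IsClosed G := by
    refine isOpen_compl_iff.mp <| isOpen_iff_mem_nhds.mpr fun s hs => ?_
    simp only [G, mem_compl_iff, mem_ofPred_eq, not_forall, not_not] at hs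
    obtain ⟨t, ht, h0⟩ := hs
    have him : 0 < t.im := ht.lt_of_ne fun h => hreal s t.re <| by
      rwa [show (t.re : ℂ) = t from Complex.ext rfl (by simpa using h)]
    filter_upwards [hq.eventually_exists_root_near continuousAt_const hb.continuousAt (hb₀ s) h0
      him] with s' ⟨t', h0', hlt⟩ hs'
    exact hs' t' (Complex.im_pos_of_norm_sub_lt_im hlt).le h0'
  have hG : G = univ := IsClopen.eq_univ ⟨hG_closed, hG_open⟩ ⟨s₁, hs₁⟩
  exact (hG ▸ mem_univ s : s ∈ G) t ht

end Complex

section Real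

variable {σ : Type*} {p : MvPolynomial σ ℝ}

theorem eval_map_ofReal (v : σ → ℝ) :
    eval (fun i => (v i : ℂ)) (map (algebraMap ℝ ℂ) p) = eval v p := by
  rw [eval_map]
  exact (eval₂_comp_left (algebraMap ℝ ℂ) (RingHom.id ℝ) v p).symm

theorem eval_map_ofReal_conj (z : σ → ℂ) :
    eval (fun i => conj (z i)) (map (algebraMap ℝ ℂ) p) =
      conj (eval z (map (algebraMap ℝ ℂ) p)) := by
  rw [eval_map, eval_map, eval₂_comp_left]
  congr 1
  ext r
  simp

end Real

end MvPolynomial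

theorem IsHyperbolicWrt.of_forall_im_pos {m : ℕ} {p : MvPolynomial (Fin m) ℝ} {e : Fin m → ℝ}
    (he : eval e p ≠ 0)
    (h : ∀ (x : Fin m → ℝ) (t : ℂ), 0 < t.im →
      eval (fun i => (x i : ℂ) + t * (e i : ℂ)) (map (algebraMap ℝ ℂ) p) ≠ 0) :
    IsHyperbolicWrt p e := by
  refine ⟨he, fun x t h0 => ?_⟩
  rcases lt_trichotomy t.im 0 with hlt | heq | hgt
  · refine absurd ?_ (h x (conj t) (by simpa using hlt))
    simpa [h0] using eval_map_ofReal_conj (p := p) fun i => (x i : ℂ) + t * (e i : ℂ)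
  · exact heq
  · exact absurd h0 (h x t hgt)

open Complex in
theorem IsHyperbolicWrt.of_segment {m d : ℕ} {p : MvPolynomial (Fin m) ℝ} {e e' : Fin m → ℝ}
    (hp : p.IsHomogeneous d) (he : IsHyperbolicWrt p e)
    (hseg : ∀ v ∈ segment ℝ e e', eval v p ≠ 0) : IsHyperbolicWrt p e' := by
  set q := map (algebraMap ℝ ℂ) p
  have hq : q.IsHomogeneous d := hp.map _
  set v : unitInterval → Fin m → ℝ := fun l => (1 - (l : ℝ)) • e + (l : ℝ) • e'
  have hv : ∀ l, v l ∈ segment ℝ e e' := fun l =>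
    ⟨1 - l, l, sub_nonneg.2 l.2.2, l.2.1, by ring, rfl⟩
  have hpert : ∀ (x : Fin m → ℝ) (ε : ℝ), 0 < ε → ∀ t : ℂ, 0 ≤ t.im →
      eval (fun i => ((x i : ℂ) + ε * I * e i) + t * e' i) q ≠ 0 := by
    intro x ε hε t ht
    have hreal : ∀ l (τ : ℝ), eval (fun i => ((x i : ℂ) + ε * I * e i) + τ * v l i) q ≠ 0 :=
      fun l τ h0 => by
        have := he.2 (fun i => x i + τ * v l i) (ε * I)
          (by convert h0 using 3; funext i; push_cast; ring)
        simp [hε.ne'] at this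
    have hstart :
        ∀ t : ℂ, 0 ≤ t.im → eval (fun i => ((x i : ℂ) + ε * I * e i) + t * v 0 i) q ≠ 0 :=
      fun t ht h0 => by
        have := he.2 x (ε * I + t) (by convert h0 using 3; funext i; simp [v]; ring)
        simp at this
        linarith
    simpa [v] using hq.eval_line_ne_zero_of_connected (b := fun l i => (v l i : ℂ)) (by fun_prop)
      (fun l => by rw [eval_map_ofReal]; exact_mod_cast hseg _ (hv l)) hreal hstart 1 ht
  refine .of_forall_im_pos (hseg e' (right_mem_segment ℝ e e')) fun x t ht h0 => ?_
  have hnear := hq.eventually_exists_root_near (x₀ := (0 : ℝ))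
    (a := fun (ε : ℝ) i => (x i : ℂ) + ε * I * e i) (b := fun _ i => (e' i : ℂ)) (by fun_prop)
    continuousAt_const
    (by rw [eval_map_ofReal]; exact_mod_cast hseg e' (right_mem_segment ℝ e e'))
    (by simpa only [ofReal_zero, zero_mul, add_zero] using h0) ht
  obtain ⟨ε, ⟨t', h0', hlt⟩, hε⟩ :=
    ((hnear.filter_mono nhdsWithin_le_nhds).and (self_mem_nhdsWithin (s := Ioi (0 : ℝ)))).exists
  exact hpert x ε hε t' (Complex.im_pos_of_norm_sub_lt_im hlt).le h0'

section Homogenization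

variable {n : ℕ} {f : MvPolynomial (Fin n) ℝ}

theorem homogenization_zero (d : ℕ) : homogenization (0 : MvPolynomial (Fin n) ℝ) d = 0 := by
  simp [homogenization]

theorem isHomogeneous_homogenization {d : ℕ} (hd : f.totalDegree ≤ d) :
    (homogenization f d).IsHomogeneous d := by
  refine IsHomogeneous.sum _ _ _ fun α hα => isHomogeneous_monomial _ ?_
  have hα : α.degree ≤ d := (le_totalDegree hα).trans hd
  rw [map_add, Finsupp.degree_mapDomain, Finsupp.degree_single]
  change α.degree + (d - α.degree) = d
  omega

theorem eval_homogenization_pos (hcoeff : ∀ α, 0 ≤ f.coeff α) (hf : f ≠ 0) (d : ℕ)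
    {v : Fin (n + 1) → ℝ} (hv : ∀ i, 0 < v i) : 0 < eval v (homogenization f d) := by
  simp only [homogenization, map_sum, eval_monomial]
  have hmon : ∀ β : Fin (n + 1) →₀ ℕ, 0 < β.prod fun i k => v i ^ k :=
    fun β => Finset.prod_pos fun i _ => pow_pos (hv i) _
  obtain ⟨α, hα⟩ := support_nonempty.mpr hf
  exact Finset.sum_pos' (fun α _ => mul_nonneg (hcoeff α) (hmon _).le)
    ⟨α, hα, mul_pos ((hcoeff α).lt_of_ne (mem_support_iff.mp hα).symm) (hmon _)⟩

end Homogenization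

/-- If `f` has non-negative coefficients and its homogenization `f_H` (with `d` the total
degree of `f`) is hyperbolic with respect to some vector with non-negative coordinates,
then `f_H` is hyperbolic with respect to every vector with strictly positive coordinates. -/
theorem stmt7 (n : ℕ) (f : MvPolynomial (Fin n) ℝ)
    (hcoeff : ∀ α, 0 ≤ f.coeff α)
    (e : Fin (n + 1) → ℝ) (he : ∀ i, 0 ≤ e i)
    (hhyp : IsHyperbolicWrt (homogenization f f.totalDegree) e) :
    ∀ e' : Fin (n + 1) → ℝ, (∀ i, 0 < e' i) →
      IsHyperbolicWrt (homogenization f f.totalDegree) e' := by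
  intro e' he'
  have hf : f ≠ 0 := by
    rintro rfl
    exact hhyp.1 (by rw [homogenization_zero, map_zero])
  refine hhyp.of_segment (isHomogeneous_homogenization le_rfl) fun v hv => ?_
  obtain ⟨a, b, ha, hb, hab, rfl⟩ := hv
  rcases hb.eq_or_lt with rfl | hb
  · simpa [show a = 1 by linarith] using hhyp.1
  · exact (eval_homogenization_pos hcoeff hf _ fun i =>
      add_pos_of_nonneg_of_pos (mul_nonneg ha (he i)) (mul_pos hb (he' i))).ne'
end

section
/- Let p(t) = Σ_{k=0}^n C(n,k) c_k t^k be a univariate real polynomial with non-negative coefficients and only real roots, where C(n,k) is the binomial coefficient. Then the sequence {c_k}_{k=0}^n is log-concave: c_k^2 ≥ c_{k−1} c_{k+1} for all 1 ≤ k ≤ n−1. -/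
/-!
Differentiation and the reflection `p ↦ Xⁿ p(1/X)` preserve real-rootedness (the former by
Rolle's theorem; the latter also when `deg p < n`, at the cost of a root at `0`). On the normalized coefficients they act as the shift `c_k ↦ c_{k+1}` and the
reversal `c_k ↦ c_{n-k}`. Differentiating `k - 1` times, reflecting and differentiating
`n - k - 1` more times turns `p` into a positive multiple of the real-rooted quadratic
`c_{k+1} + 2 c_k t + c_{k-1} t²`, whose discriminant `4 (c_k² - c_{k-1} c_{k+1})` is therefore
nonnegative.
-/

open Polynomial

namespace Polynomial

theorem splits_of_forall_aeval_complex_eq_zero_im_eq_zero {p : ℝ[X]}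
    (h : ∀ z : ℂ, aeval z p = 0 → z.im = 0) : p.Splits := by
  refine (IsAlgClosed.splits (p.map (algebraMap ℝ ℂ))).of_splits_map _ fun z hz => ?_
  have hz_im : z.im = 0 := h z (by
    rw [aeval_def, eval₂_eq_eval_map]
    exact (mem_roots'.mp hz).2)
  exact ⟨z.re, Complex.ext (by simp) (by simp [hz_im])⟩

theorem Splits.reverse {R : Type*} [Field R] {f : R[X]} (hf : f.Splits) : f.reverse.Splits := by
  induction hf using Submonoid.closure_induction with
  | mem f hf =>
    obtain ⟨a, rfl⟩ | ⟨a, rfl⟩ := hf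
    · simp
    · exact Splits.of_natDegree_le_one ((reverse_natDegree_le _).trans (by simp))
  | one => rw [← C_1, reverse_C]; exact Splits.C 1
  | mul f g _ _ hf hg => rw [reverse_mul_of_domain]; exact hf.mul hg

theorem Splits.reflect {R : Type*} [Field R] {f : R[X]} (hf : f.Splits) {N : ℕ}
    (hN : f.natDegree ≤ N) : (f.reflect N).Splits := by
  have h := reflect_mul f 1 le_rfl (natDegree_one.trans_le (Nat.zero_le (N - f.natDegree)))
  rw [mul_one, Nat.add_sub_cancel' hN, reflect_one] at h
  rw [h]
  exact hf.reverse.mul (Splits.X_pow _)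

theorem Splits.derivative {p : ℝ[X]} (hp : p.Splits) : (derivative p).Splits := by
  rw [splits_iff_card_roots] at hp ⊢
  have h_rolle := p.card_roots_le_derivative
  have h_card := (Polynomial.derivative p).card_roots'
  rw [natDegree_derivative] at h_card ⊢
  omega

noncomputable def binomialPoly {R : Type*} [Semiring R] (n : ℕ) (a : ℕ → R) : R[X] :=
  ∑ k ∈ Finset.range (n + 1), C ((n.choose k : R) * a k) * X ^ k

section CommSemiring

variable {R : Type*} [CommSemiring R]

theorem coeff_binomialPoly (n : ℕ) (a : ℕ → R) (i : ℕ) :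
    (binomialPoly n a).coeff i = if i ≤ n then (n.choose i : R) * a i else 0 := by
  simp only [binomialPoly, finsetSum_coeff, coeff_C_mul_X_pow]
  simp

theorem derivative_binomialPoly (n : ℕ) (a : ℕ → R) :
    derivative (binomialPoly (n + 1) a) =
      C ((n : R) + 1) * binomialPoly n (fun k => a (k + 1)) := by
  ext i
  rw [coeff_derivative, coeff_C_mul, coeff_binomialPoly, coeff_binomialPoly]
  split_ifs with h₁ h₂ h₂
  · have h := congrArg (Nat.cast : ℕ → R) (Nat.add_one_mul_choose_eq n i)
    push_cast at h
    rw [mul_right_comm, ← h, mul_assoc]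
  · omega
  · omega
  · simp

theorem reflect_binomialPoly (n : ℕ) (a : ℕ → R) :
    (binomialPoly n a).reflect n = binomialPoly n (fun k => a (n - k)) := by
  ext i
  rw [coeff_reflect, coeff_binomialPoly, coeff_binomialPoly]
  by_cases hi : i ≤ n
  · rw [revAt_le hi, if_pos (Nat.sub_le n i), if_pos hi, Nat.choose_symm hi]
  · rw [revAt_eq_self_of_lt (not_le.mp hi), if_neg hi, if_neg hi]

end CommSemiring

theorem Splits.binomialPoly_shift {n : ℕ} (j : ℕ) {a : ℕ → ℝ}
    (h : (binomialPoly (n + j) a).Splits) : (binomialPoly n (fun k => a (k + j))).Splits := by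
  induction j generalizing n with
  | zero => simpa using h
  | succ j ih =>
    have h' := (ih (n := n + 1) (by rwa [Nat.add_right_comm])).derivative
    rw [derivative_binomialPoly] at h'
    have hC : C ((n : ℝ) + 1) ≠ 0 := C_ne_zero.mpr (by positivity)
    simpa only [Nat.add_right_comm _ 1 j, add_assoc] using
      (splits_mul_iff_right hC (Splits.C _)).mp h'

theorem Splits.binomialPoly_reflect {n : ℕ} {a : ℕ → ℝ} (h : (binomialPoly n a).Splits) :
    (binomialPoly n (fun k => a (n - k))).Splits := by
  rw [← reflect_binomialPoly]
  exact h.reflect (natDegree_le_iff_coeff_eq_zero.mpr fun i hi => by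
    rw [coeff_binomialPoly, if_neg (not_le.mpr (by exact_mod_cast hi))])

theorem Splits.sq_coeff_binomialPoly_two {b : ℕ → ℝ} (h : (binomialPoly 2 b).Splits) :
    b 0 * b 2 ≤ b 1 ^ 2 := by
  by_cases hb : b 2 = 0
  · simp [hb, sq_nonneg]
  have hdeg : (binomialPoly 2 b).degree ≠ 0 := by
    have h2 := le_degree_of_ne_zero (p := binomialPoly 2 b) (n := 2) (by simpa [coeff_binomialPoly])
    exact (lt_of_lt_of_le (by norm_num) h2).ne'
  obtain ⟨x, hx⟩ := h.exists_eval_eq_zero hdeg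
  have hquad : b 2 * x ^ 2 + 2 * b 1 * x + b 0 = 0 := by
    rw [← hx]
    simp [binomialPoly, Finset.sum_range_succ]
    ring
  have hdisc : b 1 ^ 2 - b 0 * b 2 = (b 2 * x + b 1) ^ 2 := by
    linear_combination (-b 2) * hquad
  exact sub_nonneg.mp (hdisc ▸ sq_nonneg _)

theorem Splits.logConcave_of_binomialPoly {n : ℕ} {a : ℕ → ℝ}
    (h : (binomialPoly n a).Splits) {k : ℕ} (hk : 1 ≤ k) (hkn : k + 1 ≤ n) :
    a (k - 1) * a (k + 1) ≤ a k ^ 2 := by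
  obtain ⟨j, rfl⟩ : ∃ j, k = j + 1 := ⟨k - 1, by omega⟩
  obtain ⟨s, rfl⟩ : ∃ s, n = s + 2 + j := ⟨n - (j + 2), by omega⟩
  have h₁ := (h.binomialPoly_shift j).binomialPoly_reflect
  rw [show s + 2 = 2 + s from add_comm s 2] at h₁
  have h₂ := (h₁.binomialPoly_shift s).sq_coeff_binomialPoly_two
  rw [mul_comm]
  convert h₂ using 3 <;> omega

end Polynomial

theorem stmt10_general (n : ℕ) (c : ℕ → ℝ)
    (hroots : ∀ z : ℂ,
      Polynomial.aeval z
        (∑ k ∈ Finset.range (n + 1),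
          Polynomial.C ((n.choose k : ℝ) * c k) * Polynomial.X ^ k) = 0 → z.im = 0) :
    ∀ k : ℕ, 1 ≤ k → k + 1 ≤ n → c (k - 1) * c (k + 1) ≤ c k ^ 2 := fun _ hk hkn =>
  (splits_of_forall_aeval_complex_eq_zero_im_eq_zero (p := binomialPoly n c) hroots)
    |>.logConcave_of_binomialPoly hk hkn

/-- Newton's inequalities: if `p(t) = Σ_{k=0}^n C(n,k) c_k t^k` has non-negative
coefficients and only real roots, then `{c_k}` is log-concave:
`c_k² ≥ c_{k−1} c_{k+1}` for `1 ≤ k ≤ n−1`. -/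
theorem stmt10 (n : ℕ) (c : ℕ → ℝ)
    (hc : ∀ k ≤ n, 0 ≤ c k)
    (hroots : ∀ z : ℂ,
      Polynomial.aeval z
        (∑ k ∈ Finset.range (n + 1),
          Polynomial.C ((n.choose k : ℝ) * c k) * Polynomial.X ^ k) = 0 → z.im = 0) :
    ∀ k : ℕ, 1 ≤ k → k + 1 ≤ n → c (k - 1) * c (k + 1) ≤ c k ^ 2 :=
  stmt10_general n c hroots
end

section
/- Let {a_j}_{j=0}^n and {b_j}_{j=0}^n be non-negative log-concave sequences with no internal zeros such that (i) {a_j + b_j}_{j=0}^n is log-concave with no internal zeros, and (ii) a_j·b_{j+1} ≥ a_{j+1}·b_j for all 0 ≤ j ≤ n−1. If ℓ < k and b_ℓ·a_k > 0, then b_r·a_r > 0 for all ℓ ≤ r ≤ k. -/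
/-!
Condition (ii) says that `a j / b j` is non-increasing wherever `b` is positive. Moving up from
`ℓ`, `b` cannot drop to zero at some `j + 1 ≤ k`: condition (ii) at `j` would force
`a (j + 1) = 0`, so `a + b` would vanish inside `[ℓ, k]`, although it is positive at both ends and
has no internal zeros. Once `b > 0` on `[ℓ, k]`, moving down from `k` keeps `a` positive, since
`a j * b (j + 1) ≥ a (j + 1) * b j > 0`.
-/

/-- A sequence `c₀,…,cₙ` is non-negative, log-concave and has no internal zeros. -/
def IsLCSeq (n : ℕ) (c : ℕ → ℝ) : Prop :=
  (∀ j ≤ n, 0 ≤ c j) ∧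
  (∀ j, 1 ≤ j → j + 1 ≤ n → c (j - 1) * c (j + 1) ≤ c j ^ 2) ∧
  (∀ i j k, i ≤ j → j ≤ k → k ≤ n → 0 < c i → 0 < c k → 0 < c j)

section RatioCondition

variable {a b : ℕ → ℝ} {j ℓ k : ℕ}

lemma pos_succ_of_mul_le_mul (ha : 0 ≤ a j) (hb : 0 < b j)
    (hratio : a (j + 1) * b j ≤ a j * b (j + 1)) (hsum : 0 < a (j + 1) + b (j + 1)) :
    0 < b (j + 1) := by
  by_contra! hb₁
  have : a (j + 1) * b j ≤ 0 := hratio.trans (mul_nonpos_of_nonneg_of_nonpos ha hb₁)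
  have : a (j + 1) ≤ 0 := nonpos_of_mul_nonpos_left this hb
  linarith

lemma pos_of_mul_le_mul_of_pos_succ (ha : 0 ≤ a j) (hb : 0 < b j)
    (hratio : a (j + 1) * b j ≤ a j * b (j + 1)) (ha₁ : 0 < a (j + 1)) :
    0 < a j :=
  ha.lt_of_ne fun h ↦ by
    have := (mul_pos ha₁ hb).trans_le hratio
    simp [← h] at this

variable (ha : ∀ j ≤ k, 0 ≤ a j) (hratio : ∀ j < k, a (j + 1) * b j ≤ a j * b (j + 1))
include ha hratio

lemma pos_snd_of_sum_pos (hsum : ∀ j, ℓ ≤ j → j ≤ k → 0 < a j + b j) (hbℓ : 0 < b ℓ) :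
    ∀ j, ℓ ≤ j → j ≤ k → 0 < b j := by
  intro j hℓj
  induction j, hℓj using Nat.le_induction with
  | base => exact fun _ ↦ hbℓ
  | succ j hℓj ih =>
    intro hjk
    exact pos_succ_of_mul_le_mul (ha j (by omega)) (ih (by omega)) (hratio j hjk)
      (hsum (j + 1) (by omega) hjk)

lemma pos_fst_of_pos_snd (hb : ∀ j, ℓ ≤ j → j ≤ k → 0 < b j) (hak : 0 < a k) :
    ∀ j, ℓ ≤ j → j ≤ k → 0 < a j := by
  intro j hℓj hjk
  induction hjk using Nat.decreasingInduction with
  | self => exact hak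
  | of_succ j hjk ih =>
    exact pos_of_mul_le_mul_of_pos_succ (ha j hjk.le) (hb j hℓj hjk.le) (hratio j hjk)
      (ih (by omega))

end RatioCondition

theorem stmt11_general (n : ℕ) (a b : ℕ → ℝ)
    (ha : IsLCSeq n a) (hb : IsLCSeq n b)
    (hab : IsLCSeq n (fun j => a j + b j))
    (hratio : ∀ j, j + 1 ≤ n → a (j + 1) * b j ≤ a j * b (j + 1))
    (ℓ k : ℕ) (hk : k ≤ n) (hpos : 0 < b ℓ * a k) :
    ∀ r, ℓ ≤ r → r ≤ k → 0 < b r * a r := by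
  intro r hℓr hrk
  have ha₀ : ∀ j ≤ k, 0 ≤ a j := fun j hj ↦ ha.1 j (hj.trans hk)
  have hratio' : ∀ j < k, a (j + 1) * b j ≤ a j * b (j + 1) := fun j hj ↦ hratio j (by omega)
  have hbℓ : 0 < b ℓ := pos_of_mul_pos_left hpos (ha₀ k le_rfl)
  have hak : 0 < a k := pos_of_mul_pos_right hpos (hb.1 ℓ (by omega))
  have hsum : ∀ j, ℓ ≤ j → j ≤ k → 0 < a j + b j := fun j hℓj hjk ↦
    hab.2.2 ℓ j k hℓj hjk hk (by linarith [ha₀ ℓ (by omega)]) (by linarith [hb.1 k hk])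
  have hB := pos_snd_of_sum_pos ha₀ hratio' hsum hbℓ
  exact mul_pos (hB r hℓr hrk) (pos_fst_of_pos_snd ha₀ hratio' hB hak r hℓr hrk)

/-- If `{a_j}` and `{b_j}` are LC sequences such that `{a_j + b_j}` is LC and
`a_j b_{j+1} ≥ a_{j+1} b_j`, and `ℓ < k` with `b_ℓ a_k > 0`, then `b_r a_r > 0`
for all `ℓ ≤ r ≤ k`. -/
theorem stmt11 (n : ℕ) (a b : ℕ → ℝ)
    (ha : IsLCSeq n a) (hb : IsLCSeq n b)
    (hab : IsLCSeq n (fun j => a j + b j))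
    (hratio : ∀ j, j + 1 ≤ n → a (j + 1) * b j ≤ a j * b (j + 1))
    (ℓ k : ℕ) (hlk : ℓ < k) (hk : k ≤ n) (hpos : 0 < b ℓ * a k) :
    ∀ r, ℓ ≤ r → r ≤ k → 0 < b r * a r :=
  stmt11_general n a b ha hb hab hratio ℓ k hk hpos
end

section
/- Let G = C_n be the n-cycle (n ≥ 3) with edge set {1,...,n}, and let Z_G(z,q) = Σ_{F ⊆ [n]} q^{k(F)} z^F be its multivariate Tutte polynomial, which equals Π_{j=1}^n (q + z_j) + (q−1)·z_1···z_n. Then for all z ∈ ℝ^n and 0 < q: (∂Z_G/∂z1)·(∂Z_G/∂z2) − Z_G·(∂²Z_G/∂z1∂z2) = q²(1−q)·Π_{j=3}^n z_j(q + z_j). -/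
/-!
Split off the factors of edges `1` and `2`: with `u = z₁`, `v = z₂`,
`Z = (q + u)(q + v) A + d u v B`, where `A = ∏_{j ≥ 3} (q + z_j)`, `B = ∏_{j ≥ 3} z_j`
and `d = q - 1` do not involve `u, v`. Then `∂₁Z = (q + v) A + d v B`,
`∂₂Z = (q + u) A + d u B`, `∂₁∂₂Z = A + d B`, and in the Rayleigh difference everything
cancels except `-q² d A B = q²(1 - q) ∏_{j ≥ 3} z_j (q + z_j)`.
-/

open MvPolynomial Finset

theorem Finset.prod_univ_eq_mul_mul_prod_filter_ne {ι M : Type*} [Fintype ι] [DecidableEq ι]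
    [CommMonoid M] {a b : ι} (hab : a ≠ b) (f : ι → M) :
    ∏ j, f j = f a * (f b * ∏ j ∈ univ.filter (fun j => j ≠ a ∧ j ≠ b), f j) := by
  have hb : b ∈ univ.erase a := mem_erase.mpr ⟨hab.symm, mem_univ b⟩
  have hrest : (univ.erase a).erase b = univ.filter (fun j => j ≠ a ∧ j ≠ b) := by
    ext j; simp [and_comm]
  rw [← mul_prod_erase univ f (mem_univ a), ← mul_prod_erase _ f hb, hrest]

namespace MvPolynomial

variable {R σ : Type*}

theorem pderiv_prod_eq_zero_of_notMem [CommSemiring R] {i : σ} {s : Finset σ} (hi : i ∉ s)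
    (f : σ → MvPolynomial σ R) (hf : ∀ j ≠ i, pderiv i (f j) = 0) :
    pderiv i (∏ j ∈ s, f j) = 0 :=
  prod_induction f (fun p => pderiv i p = 0)
    (fun a b ha hb => by rw [pderiv_mul, ha, hb, mul_zero, zero_mul, add_zero])
    (Derivation.map_one_eq_zero _) fun j hj => hf j (ne_of_mem_of_not_mem hj hi)

theorem rayleigh_difference_of_two_variable_form [CommRing R] {a b : σ} (hab : a ≠ b)
    (c d : R) {A B : MvPolynomial σ R}
    (hAa : pderiv a A = 0) (hAb : pderiv b A = 0) (hBa : pderiv a B = 0) (hBb : pderiv b B = 0) :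
    let Z := (C c + X a) * ((C c + X b) * A) + C d * (X a * (X b * B))
    pderiv a Z * pderiv b Z - Z * pderiv a (pderiv b Z) = -C (c ^ 2 * d) * A * B := by
  intro Z
  simp only [Z, map_add, pderiv_mul, pderiv_C, pderiv_X_self, pderiv_X_of_ne hab,
    pderiv_X_of_ne hab.symm, hAa, hAb, hBa, hBb, Derivation.map_one_eq_zero, map_zero, map_mul,
    map_pow]
  ring

end MvPolynomial

theorem stmt14_general (n : ℕ) (q : ℝ) :
    ∀ z : Fin (n + 3) → ℝ,
      MvPolynomial.eval z (MvPolynomial.pderiv 0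
          ((∏ j : Fin (n + 3), (MvPolynomial.C q + MvPolynomial.X j)) +
            MvPolynomial.C (q - 1) * ∏ j : Fin (n + 3), MvPolynomial.X j)) *
        MvPolynomial.eval z (MvPolynomial.pderiv 1
          ((∏ j : Fin (n + 3), (MvPolynomial.C q + MvPolynomial.X j)) +
            MvPolynomial.C (q - 1) * ∏ j : Fin (n + 3), MvPolynomial.X j)) -
      MvPolynomial.eval z
          ((∏ j : Fin (n + 3), (MvPolynomial.C q + MvPolynomial.X j)) +
            MvPolynomial.C (q - 1) * ∏ j : Fin (n + 3), MvPolynomial.X j) *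
        MvPolynomial.eval z (MvPolynomial.pderiv 0 (MvPolynomial.pderiv 1
          ((∏ j : Fin (n + 3), (MvPolynomial.C q + MvPolynomial.X j)) +
            MvPolynomial.C (q - 1) * ∏ j : Fin (n + 3), MvPolynomial.X j))) =
      q ^ 2 * (1 - q) *
        ∏ j ∈ Finset.univ.filter (fun j : Fin (n + 3) => j ≠ 0 ∧ j ≠ 1),
          z j * (q + z j) := by
  intro z
  have h01 : (0 : Fin (n + 3)) ≠ 1 := by simp
  have hC (i : Fin (n + 3)) : ∀ j ≠ i, pderiv i (C q + X j : MvPolynomial (Fin (n + 3)) ℝ) = 0 :=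
    fun j hj => by simp [pderiv_X_of_ne hj]
  have hX (i : Fin (n + 3)) : ∀ j ≠ i, pderiv i (X j : MvPolynomial (Fin (n + 3)) ℝ) = 0 :=
    fun j hj => pderiv_X_of_ne hj
  rw [prod_univ_eq_mul_mul_prod_filter_ne h01 (fun j => C q + X j),
    prod_univ_eq_mul_mul_prod_filter_ne h01 X, ← map_mul, ← map_mul, ← map_sub,
    rayleigh_difference_of_two_variable_form h01 q (q - 1)
      (pderiv_prod_eq_zero_of_notMem (by simp) _ (hC 0))
      (pderiv_prod_eq_zero_of_notMem (by simp) _ (hC 1))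
      (pderiv_prod_eq_zero_of_notMem (by simp) _ (hX 0))
      (pderiv_prod_eq_zero_of_notMem (by simp) _ (hX 1))]
  simp only [map_mul, map_neg, eval_C, map_prod, map_add, eval_X, prod_mul_distrib]
  ring

/-- For the cycle `C_{n+3}` with multivariate Tutte polynomial
`Z(z,q) = ∏ⱼ (q + zⱼ) + (q−1) z₁⋯z_{n+3}` and `q > 0`, the Rayleigh difference satisfies
`∂₁Z·∂₂Z − Z·∂₁∂₂Z = q²(1−q)·∏_{j≥3} zⱼ(q + zⱼ)`. -/
theorem stmt14 (n : ℕ) (q : ℝ) (hq : 0 < q) :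
    ∀ z : Fin (n + 3) → ℝ,
      MvPolynomial.eval z (MvPolynomial.pderiv 0
          ((∏ j : Fin (n + 3), (MvPolynomial.C q + MvPolynomial.X j)) +
            MvPolynomial.C (q - 1) * ∏ j : Fin (n + 3), MvPolynomial.X j)) *
        MvPolynomial.eval z (MvPolynomial.pderiv 1
          ((∏ j : Fin (n + 3), (MvPolynomial.C q + MvPolynomial.X j)) +
            MvPolynomial.C (q - 1) * ∏ j : Fin (n + 3), MvPolynomial.X j)) -
      MvPolynomial.eval z
          ((∏ j : Fin (n + 3), (MvPolynomial.C q + MvPolynomial.X j)) +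
            MvPolynomial.C (q - 1) * ∏ j : Fin (n + 3), MvPolynomial.X j) *
        MvPolynomial.eval z (MvPolynomial.pderiv 0 (MvPolynomial.pderiv 1
          ((∏ j : Fin (n + 3), (MvPolynomial.C q + MvPolynomial.X j)) +
            MvPolynomial.C (q - 1) * ∏ j : Fin (n + 3), MvPolynomial.X j))) =
      q ^ 2 * (1 - q) *
        ∏ j ∈ Finset.univ.filter (fun j : Fin (n + 3) => j ≠ 0 ∧ j ≠ 1),
          z j * (q + z j) :=
  stmt14_general n q
end
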